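/- arXiv:1406.0591 — 3 statements merged into one kernel-verified Lean document; each statement's English description precedes it below -/
import Mathlib

section
/- Let K = ℚ(q), N ≥ 3, and 1 ≤ i, j ≤ ⌊N/2⌋. Define d^{(1)}(z) = ∏_{s=1}^{min(i,j,N−i,N−j)} (z − (−q)^{|i−j|+2s}) and d^{(2)}(z) = ∏_{s=1}^{min(i,j)} (z − (−q)^{|i−j|+2s})(z + q^N(−q)^{−i−j+2s}) in K[z]. Then for every integer m with m ≡ i + j (mod 2), the multiplicity of (−q)^m as a root of d^{(1)}(z) equals the multiplicity of (−q)^m as a root of d^{(2)}(z). -/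
open Polynomial

noncomputable def qq : RatFunc ℚ := RatFunc.X

/-!
The two denominators share the factors `z - (-q)^(|i-j|+2s)`, since `min(N-i, N-j) ≥ min(i, j)`.
Every extra factor of `d^{(2)}` is `z + q^N (-q)^t` with `t ≡ i + j (mod 2)`; at `z = (-q)^m` with
`m ≡ t (mod 2)` it equals `(-q)^t (q^(m-t) + q^N)`, and a sum of two powers of the indeterminate `q`
never vanishes. So these factors contribute nothing to the multiplicity of `(-q)^m`.
-/

theorem Polynomial.rootMultiplicity_mul_of_not_isRoot {R : Type*} [CommRing R] [IsDomain R]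
    {p q : R[X]} {a : R} (hp : p ≠ 0) (hq : ¬q.IsRoot a) :
    (p * q).rootMultiplicity a = p.rootMultiplicity a := by
  have hq0 : q ≠ 0 := fun h => hq (by simp [h])
  rw [rootMultiplicity_mul (mul_ne_zero hp hq0), rootMultiplicity_eq_zero hq, add_zero]

namespace RatFunc

variable {K : Type*} [Field K] [NeZero (2 : K)]

theorem X_pow_ne_neg_one (n : ℕ) : (RatFunc.X : RatFunc K) ^ n ≠ -1 := by
  intro h
  have hpoly : (Polynomial.X : K[X]) ^ n = -1 := by
    apply IsFractionRing.injective K[X] (RatFunc K)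
    simpa [RatFunc.algebraMap_X] using h
  have hone : (1 : K) = -1 := by simpa using congrArg (Polynomial.eval 1) hpoly
  exact two_ne_zero (α := K) (by linear_combination hone)

theorem X_zpow_ne_neg_one (n : ℤ) : (RatFunc.X : RatFunc K) ^ n ≠ -1 := by
  obtain ⟨k, rfl | rfl⟩ := n.eq_nat_or_neg
  · rw [zpow_natCast]
    exact X_pow_ne_neg_one k
  · rw [zpow_neg, zpow_natCast, Ne, inv_eq_iff_eq_inv, inv_neg_one]
    exact X_pow_ne_neg_one k

theorem X_zpow_add_X_zpow_ne_zero (a b : ℤ) :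
    (RatFunc.X : RatFunc K) ^ a + RatFunc.X ^ b ≠ 0 := by
  have hX : (RatFunc.X : RatFunc K) ≠ 0 := X_ne_zero
  intro h
  apply X_zpow_ne_neg_one (K := K) (a - b)
  rw [zpow_sub₀ hX, div_eq_iff (zpow_ne_zero b hX)]
  linear_combination h

theorem neg_X_zpow_add_X_zpow_mul_neg_X_zpow_ne_zero {m t : ℤ} (hmt : Even (m - t)) (n : ℤ) :
    (-RatFunc.X : RatFunc K) ^ m + RatFunc.X ^ n * (-RatFunc.X) ^ t ≠ 0 := by
  have hX : (-RatFunc.X : RatFunc K) ≠ 0 := neg_ne_zero.mpr X_ne_zero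
  have hsplit : (-RatFunc.X : RatFunc K) ^ m = RatFunc.X ^ (m - t) * (-RatFunc.X) ^ t := by
    rw [← hmt.neg_zpow, ← zpow_add₀ hX, sub_add_cancel]
  rw [hsplit, ← add_mul]
  exact mul_ne_zero (X_zpow_add_X_zpow_ne_zero _ _) (zpow_ne_zero t hX)

end RatFunc

theorem stmt4_general (N i j : ℕ) (hi2 : i ≤ N / 2) (hj2 : j ≤ N / 2)
    (d1 d2 : Polynomial (RatFunc ℚ))
    (hd1 : d1 = ∏ s ∈ Finset.Icc 1 (min (min i j) (min (N - i) (N - j))),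
      (X - C ((-qq) ^ (|(i : ℤ) - (j : ℤ)| + 2 * (s : ℤ)))))
    (hd2 : d2 = ∏ s ∈ Finset.Icc 1 (min i j),
      (X - C ((-qq) ^ (|(i : ℤ) - (j : ℤ)| + 2 * (s : ℤ)))) *
      (X + C (qq ^ (N : ℤ) * (-qq) ^ (-(i : ℤ) - (j : ℤ) + 2 * (s : ℤ)))))
    (m : ℤ) (hm : (2 : ℤ) ∣ (m - ((i : ℤ) + (j : ℤ)))) :
    d1.rootMultiplicity ((-qq) ^ m) = d2.rootMultiplicity ((-qq) ^ m) := by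
  have hmin : min (min i j) (min (N - i) (N - j)) = min i j := by omega
  rw [hmin] at hd1
  have hd2' : d2 = d1 * ∏ s ∈ Finset.Icc 1 (min i j),
      (X + C (qq ^ (N : ℤ) * (-qq) ^ (-(i : ℤ) - (j : ℤ) + 2 * (s : ℤ)))) := by
    rw [hd2, hd1, Finset.prod_mul_distrib]
  rw [hd2', rootMultiplicity_mul_of_not_isRoot]
  · rw [hd1]
    exact Finset.prod_ne_zero_iff.mpr fun s _ => X_sub_C_ne_zero _
  · simp only [IsRoot, eval_prod, eval_add, eval_X, eval_C]
    refine Finset.prod_ne_zero_iff.mpr fun s _ => ?_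
    exact RatFunc.neg_X_zpow_add_X_zpow_mul_neg_X_zpow_ne_zero
      (by rw [even_iff_two_dvd]; omega) _

theorem stmt4 (N i j : ℕ) (hN : 3 ≤ N) (hi1 : 1 ≤ i) (hi2 : i ≤ N / 2)
    (hj1 : 1 ≤ j) (hj2 : j ≤ N / 2)
    (d1 d2 : Polynomial (RatFunc ℚ))
    (hd1 : d1 = ∏ s ∈ Finset.Icc 1 (min (min i j) (min (N - i) (N - j))),
      (X - C ((-qq) ^ (|(i : ℤ) - (j : ℤ)| + 2 * (s : ℤ)))))
    (hd2 : d2 = ∏ s ∈ Finset.Icc 1 (min i j),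
      (X - C ((-qq) ^ (|(i : ℤ) - (j : ℤ)| + 2 * (s : ℤ)))) *
      (X + C (qq ^ (N : ℤ) * (-qq) ^ (-(i : ℤ) - (j : ℤ) + 2 * (s : ℤ)))))
    (m : ℤ) (hm : (2 : ℤ) ∣ (m - ((i : ℤ) + (j : ℤ)))) :
    d1.rootMultiplicity ((-qq) ^ m) = d2.rootMultiplicity ((-qq) ^ m) :=
  stmt4_general N i j hi2 hj2 d1 d2 hd1 hd2 m hm
end

section
/- Let K = ℚ(q), N ≥ 3, and suppose 1 ≤ i ≤ ⌊N/2⌋ < j ≤ N−1. Define d^{(1)}(z) = ∏_{s=1}^{min(i,j,N−i,N−j)} (z − (−q)^{|i−j|+2s}) and d^{(2)}(z) = ∏_{s=1}^{min(i,N−j)} (z − (−q)^{|i−(N−j)|+2s})(z + q^N(−q)^{−i−(N−j)+2s}) in K[z]. Then for every integer m with m ≡ i + j (mod 2), the multiplicity of (−q)^m as a root of d^{(1)}(z) equals the multiplicity of (−1)^{N−1}(−q)^m as a root of d^{(2)}(z). -/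
/-!
The second factors of `d2` are `X - C ((-1) ^ (N - 1) * (-q) ^ (j - i + 2 s))`, since
`q ^ N * (-q) ^ (t - N) = (-1) ^ N * (-q) ^ t`; they vanish at `(-1) ^ (N - 1) * (-q) ^ m` exactly
when the factors of `d1` vanish at `(-q) ^ m`. The first factors of `d2` never vanish there:
`-q` has integer degree `1`, so `(-q) ^ a = ± (-q) ^ b` forces `a = b` with sign `+`, and this
is excluded by the parity of `m`.
-/

open Polynomial

open Finset

theorem Polynomial.rootMultiplicity_prod_X_sub_C {R ι : Type*} [CommRing R] [IsDomain R]
    [DecidableEq R] (s : Finset ι) (f : ι → R) (x : R) :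
    (∏ i ∈ s, (X - C (f i))).rootMultiplicity x = #{i ∈ s | x = f i} := by
  rw [← count_roots, Finset.prod_eq_multiset_prod,
    show s.val.map (fun i => X - C (f i)) = (s.val.map f).map (fun a => X - C a) from
      (Multiset.map_map (fun a => X - C a) f s.val).symm,
    roots_multiset_prod_X_sub_C, Multiset.count_map]
  rfl

theorem RatFunc.intDegree_zpow {K : Type*} [Field K] {x : RatFunc K} (hx : x ≠ 0) (k : ℤ) :
    (x ^ k).intDegree = k * x.intDegree := by
  induction k using Int.induction_on with
  | zero => simp
  | succ k ih =>
    rw [zpow_add_one₀ hx, intDegree_mul (zpow_ne_zero _ hx) hx, ih]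
    ring
  | pred k ih =>
    rw [zpow_sub_one₀ hx, intDegree_mul (zpow_ne_zero _ hx) (inv_ne_zero hx), intDegree_inv, ih]
    ring

theorem zpow_mul_neg_zpow_sub {K : Type*} [Field K] {x : K} (hx : x ≠ 0) (n : ℕ) (t : ℤ) :
    x ^ (n : ℤ) * (-x) ^ (t - n) = (-1) ^ n * (-x) ^ t := by
  have hxn : x ^ (n : ℤ) = (-1) ^ n * (-x) ^ (n : ℤ) := by
    rw [zpow_natCast, zpow_natCast, ← mul_pow, neg_one_mul, neg_neg]
  rw [hxn, mul_assoc, ← zpow_add₀ (neg_ne_zero.2 hx), add_sub_cancel]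

theorem neg_qq_ne_zero : -qq ≠ 0 :=
  neg_ne_zero.2 RatFunc.X_ne_zero

theorem intDegree_neg_qq_zpow (k : ℤ) : ((-qq) ^ k).intDegree = k := by
  rw [RatFunc.intDegree_zpow neg_qq_ne_zero, qq, RatFunc.intDegree_neg, RatFunc.intDegree_X,
    mul_one]

theorem X_add_C_qq_zpow_mul_neg_qq_zpow_sub (n : ℕ) (t : ℤ) :
    X + C (qq ^ (n : ℤ) * (-qq) ^ (t - n)) = X - C ((-1) ^ (n + 1) * (-qq) ^ t) := by
  rw [zpow_mul_neg_zpow_sub RatFunc.X_ne_zero, pow_succ, mul_neg_one, neg_mul, map_neg,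
    sub_neg_eq_add]

theorem neg_qq_zpow_ne_neg_one_pow_mul {a b : ℤ} {n : ℕ} (hodd : Odd (a + b + n)) :
    (-qq) ^ a ≠ (-1) ^ n * (-qq) ^ b := by
  intro h
  have hdeg_sign : ((-1 : RatFunc ℚ) ^ n).intDegree = 0 := by
    rcases neg_one_pow_eq_or (RatFunc ℚ) n with hpm | hpm <;>
      rw [hpm] <;> simp only [RatFunc.intDegree_neg, RatFunc.intDegree_one]
  have hab : a = b := by
    have hdeg := congrArg RatFunc.intDegree h
    rwa [intDegree_neg_qq_zpow, RatFunc.intDegree_mul (pow_ne_zero n (neg_ne_zero.2 one_ne_zero))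
      (zpow_ne_zero _ neg_qq_ne_zero), hdeg_sign, zero_add, intDegree_neg_qq_zpow] at hdeg
  subst hab
  have hn : Even n := by
    rw [← neg_one_pow_eq_one_iff_even (R := RatFunc ℚ) (by norm_num)]
    exact (mul_eq_right₀ (zpow_ne_zero _ neg_qq_ne_zero)).1 h.symm
  rw [← two_mul] at hodd
  exact Int.not_even_iff_odd.2 hodd (by simpa [parity_simps] using hn)

theorem stmt5_general (N i j : ℕ) (hi2 : i ≤ N / 2)
    (hj1 : N / 2 < j) (hj2 : j ≤ N - 1)
    (d1 d2 : Polynomial (RatFunc ℚ))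
    (hd1 : d1 = ∏ s ∈ Finset.Icc 1 (min (min i j) (min (N - i) (N - j))),
      (X - C ((-qq) ^ (|(i : ℤ) - (j : ℤ)| + 2 * (s : ℤ)))))
    (hd2 : d2 = ∏ s ∈ Finset.Icc 1 (min i (N - j)),
      (X - C ((-qq) ^ (|(i : ℤ) - ((N : ℤ) - (j : ℤ))| + 2 * (s : ℤ)))) *
      (X + C (qq ^ (N : ℤ) * (-qq) ^ (-(i : ℤ) - ((N : ℤ) - (j : ℤ)) + 2 * (s : ℤ)))))
    (m : ℤ) (hm : (2 : ℤ) ∣ (m - ((i : ℤ) + (j : ℤ)))) :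
    d1.rootMultiplicity ((-qq) ^ m) =
      d2.rootMultiplicity (((-1 : RatFunc ℚ)) ^ (N - 1) * (-qq) ^ m) := by
  classical
  have hsign : (-1 : RatFunc ℚ) ^ (N - 1) = (-1) ^ (N + 1) := by
    rw [show N + 1 = N - 1 + 2 by omega, pow_add, neg_one_sq, mul_one]
  have hd2' : d2 = (∏ s ∈ Icc 1 (min i (N - j)),
      (X - C ((-qq) ^ (|(i : ℤ) - ((N : ℤ) - (j : ℤ))| + 2 * (s : ℤ))))) *
      ∏ s ∈ Icc 1 (min i (N - j)), (X - C ((-1) ^ (N + 1) * (-qq) ^ ((j : ℤ) - i + 2 * s))) := by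
    rw [hd2, ← prod_mul_distrib]
    refine prod_congr rfl fun s _ => ?_
    rw [show -(i : ℤ) - ((N : ℤ) - j) + 2 * s = (j - i + 2 * s) - N by ring,
      X_add_C_qq_zpow_mul_neg_qq_zpow_sub]
  have hno_root : ∀ s ∈ Icc 1 (min i (N - j)), ¬((-1 : RatFunc ℚ) ^ (N + 1) * (-qq) ^ m =
      (-qq) ^ (|(i : ℤ) - ((N : ℤ) - (j : ℤ))| + 2 * (s : ℤ))) := by
    intro s _ h
    refine neg_qq_zpow_ne_neg_one_pow_mul ?_ h.symm
    rcases abs_cases ((i : ℤ) - (N - j)) with ⟨habs, _⟩ | ⟨habs, _⟩ <;>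
      rw [Int.odd_iff, habs] <;> omega
  have hprod_ne (f : ℕ → RatFunc ℚ) : ∏ s ∈ Icc 1 (min i (N - j)), (X - C (f s)) ≠ 0 :=
    (monic_prod_of_monic _ _ fun _ _ => monic_X_sub_C _).ne_zero
  rw [hd1, hd2', show min (min i j) (min (N - i) (N - j)) = min i (N - j) by omega,
    abs_sub_comm, abs_of_nonneg (by omega : (0 : ℤ) ≤ j - i), hsign,
    rootMultiplicity_mul (mul_ne_zero (hprod_ne _) (hprod_ne _)),
    rootMultiplicity_prod_X_sub_C, rootMultiplicity_prod_X_sub_C,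
    rootMultiplicity_prod_X_sub_C, filter_false_of_mem hno_root, card_empty, zero_add]
  simp only [mul_right_inj' (pow_ne_zero (N + 1) (neg_ne_zero.2 (one_ne_zero' (RatFunc ℚ))))]

theorem stmt5 (N i j : ℕ) (hN : 3 ≤ N) (hi1 : 1 ≤ i) (hi2 : i ≤ N / 2)
    (hj1 : N / 2 < j) (hj2 : j ≤ N - 1)
    (d1 d2 : Polynomial (RatFunc ℚ))
    (hd1 : d1 = ∏ s ∈ Finset.Icc 1 (min (min i j) (min (N - i) (N - j))),
      (X - C ((-qq) ^ (|(i : ℤ) - (j : ℤ)| + 2 * (s : ℤ)))))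
    (hd2 : d2 = ∏ s ∈ Finset.Icc 1 (min i (N - j)),
      (X - C ((-qq) ^ (|(i : ℤ) - ((N : ℤ) - (j : ℤ))| + 2 * (s : ℤ)))) *
      (X + C (qq ^ (N : ℤ) * (-qq) ^ (-(i : ℤ) - ((N : ℤ) - (j : ℤ)) + 2 * (s : ℤ)))))
    (m : ℤ) (hm : (2 : ℤ) ∣ (m - ((i : ℤ) + (j : ℤ)))) :
    d1.rootMultiplicity ((-qq) ^ m) =
      d2.rootMultiplicity (((-1 : RatFunc ℚ)) ^ (N - 1) * (-qq) ^ m) :=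
  stmt5_general N i j hi2 hj1 hj2 d1 d2 hd1 hd2 m hm
end

section
/- Let k be a field, N ≥ 2 an integer, and let {ψ_a(z)}_{a∈ℤ} be a family of invertible formal power series in k[[z]] satisfying ψ_a(0)·ψ_{−a−N+1}(0) = 1 for all a ∈ ℤ and ∏_{k=1−N}^{0} ψ_k(0) = 1. Define φ_0(z) := 1; φ_k(z) := ψ_{k−N}(z)^{−1} for 1 ≤ k ≤ N−2; φ_{N−1}(z) := ψ_0(z)·∏_{k=1}^{N−2} φ_k(z)^{−1}; and recursively φ_k(z) := (ψ_{k−N+1}(z)/ψ_{k−N}(z))·φ_{k−N}(z) for k ≥ N, and φ_k(z) := (ψ_k(z)/ψ_{k+1}(z))·φ_{k+N}(z) for k ≤ −1. Then the family {φ_k(z)}_{k∈ℤ} satisfies: (a) φ_a(0)·φ_{−a}(0) = 1 for every a ∈ ℤ, and (b) ∏_{k=a}^{a+N−1} φ_k(z) = ψ_a(z) for every a ∈ ℤ. -/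
/-!
The recursion for `φ` says exactly `φ a * ψ (a + 1) = ψ a * φ (a + N)` for every `a`. Hence the
window products `∏_{k=a}^{a+N-1} φ k` satisfy the same first-order recursion as `ψ a`; they agree
at `a = 0`, and `ψ` takes unit values, so they agree everywhere.

On constant terms, the recursion together with `ψ_a(0) ψ_{-a-N+1}(0) = 1` makes
`a ↦ φ_a(0) φ_{-a}(0)` periodic of period `N`. On `0 ≤ a < N` it equals `1`, because
`φ_a(0) ψ_{a-N}(0) = 1` for `1 ≤ a ≤ N - 1`; for `a = N - 1` this is where
`∏_{k=1-N}^{0} ψ_k(0) = 1` enters.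
-/

open Finset

section IntervalProducts

variable {M : Type*} [CommMonoid M]

lemma prod_Icc_eq_mul_prod_Icc_add_one (f : ℤ → M) {a b : ℤ} (h : a ≤ b) :
    ∏ i ∈ Icc a b, f i = f a * ∏ i ∈ Icc (a + 1) b, f i := by
  rw [← insert_Icc_add_one_left_eq_Icc h, prod_insert (by simp)]

lemma prod_Icc_eq_prod_Icc_sub_one_mul (f : ℤ → M) {a b : ℤ} (h : a ≤ b) :
    ∏ i ∈ Icc a b, f i = (∏ i ∈ Icc a (b - 1), f i) * f b := by
  rw [← insert_Icc_sub_one_right_eq_Icc h, prod_insert (by simp), mul_comm]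

lemma prod_Icc_sub (f : ℤ → M) (a b c : ℤ) :
    ∏ i ∈ Icc a b, f (i - c) = ∏ i ∈ Icc (a - c) (b - c), f i := by
  simp only [sub_eq_add_neg, ← map_add_right_Icc, prod_map, addRightEmbedding_apply]

lemma eq_of_mul_add_one_eq_mul_add_one {u v : ℤ → M} (hv : ∀ a, IsUnit (v a))
    (h : ∀ a, u a * v (a + 1) = v a * u (a + 1)) (h0 : u 0 = v 0) (a : ℤ) : u a = v a := by
  induction a using Int.induction_on with
  | zero => exact h0
  | succ n ih =>
    have hn := h n
    rw [ih] at hn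
    exact ((hv n).mul_left_cancel hn).symm
  | pred n ih =>
    have hn := h (-n - 1)
    rw [sub_add_cancel, ih] at hn
    exact (hv _).mul_right_cancel hn

theorem prod_Icc_window_eq {φ ψ : ℤ → M} {N : ℤ} (hN : 0 < N) (hψ : ∀ a, IsUnit (ψ a))
    (hrec : ∀ a, φ a * ψ (a + 1) = ψ a * φ (a + N))
    (h0 : ∏ i ∈ Icc 0 (N - 1), φ i = ψ 0) (a : ℤ) :
    ∏ i ∈ Icc a (a + N - 1), φ i = ψ a := by
  refine eq_of_mul_add_one_eq_mul_add_one (u := fun a => ∏ i ∈ Icc a (a + N - 1), φ i) hψ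
    (fun a => ?_) (by simp only [zero_add]; exact h0) a
  rw [prod_Icc_eq_mul_prod_Icc_add_one φ (by omega), show a + 1 + N - 1 = a + N by ring,
    prod_Icc_eq_prod_Icc_sub_one_mul φ (by omega : a + 1 ≤ a + N)]
  calc φ a * (∏ i ∈ Icc (a + 1) (a + N - 1), φ i) * ψ (a + 1)
      = φ a * ψ (a + 1) * ∏ i ∈ Icc (a + 1) (a + N - 1), φ i := mul_right_comm _ _ _
    _ = ψ a * φ (a + N) * ∏ i ∈ Icc (a + 1) (a + N - 1), φ i := by rw [hrec]
    _ = ψ a * ((∏ i ∈ Icc (a + 1) (a + N - 1), φ i) * φ (a + N)) := by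
      rw [mul_assoc, mul_comm (φ _)]

end IntervalProducts

lemma Function.Periodic.eq_of_forall_mem_Ico {α : Type*} {P : ℤ → α} {N : ℤ} {c : α}
    (hP : Function.Periodic P N) (hN : 0 < N) (h : ∀ a ∈ Set.Ico 0 N, P a = c) (a : ℤ) :
    P a = c := by
  rw [← hP.sub_int_mul_eq (a / N), Int.cast_id, mul_comm, ← Int.emod_def]
  exact h _ ⟨Int.emod_nonneg a hN.ne', Int.emod_lt_of_pos a hN⟩

section ConstantTerms

variable {R : Type*} [CommRing R] {N : ℤ} {f g : ℤ → R}

lemma periodic_mul_apply_neg (hg : ∀ a, g a * g (-a - N + 1) = 1)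
    (hrec : ∀ a, f a * g (a + 1) = g a * f (a + N)) :
    Function.Periodic (fun a => f a * f (-a)) N := by
  intro a
  have h1 := hrec a
  have h2 := hrec (-(a + N))
  have h3 := hg a
  have h4 := hg (a + 1)
  rw [show -(a + N) + N = -a by ring] at h2
  rw [show -a - N + 1 = -(a + N) + 1 by ring] at h3
  rw [show -(a + 1) - N + 1 = -(a + N) by ring] at h4
  -- Insert the factors `h3` and `h4`, both equal to `1`, then apply the recursion at `a` and `-(a + N)`.
  linear_combination (-(f (a + N) * f (-(a + N))) * (g (a + 1) * g (-(a + N)))) * h3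
    + (f a * f (-a) * (g (a + 1) * g (-(a + N)) + 1) - f (a + N) * f (-(a + N))) * h4
    + (f a * g (a + 1) * (g (a + 1) * g (-(a + N)))) * h2
    - (f (-(a + N)) * g (-(a + N) + 1) * (g (a + 1) * g (-(a + N)))) * h1

lemma mul_apply_sub_eq_one_of_le_sub_one (hN : 2 ≤ N) (hprod : ∏ i ∈ Icc (1 - N) 0, g i = 1)
    (hmid : ∀ i, 1 ≤ i → i ≤ N - 2 → f i * g (i - N) = 1)
    (htop : f (N - 1) * ∏ i ∈ Icc 1 (N - 2), f i = g 0) :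
    ∀ i, 1 ≤ i → i ≤ N - 1 → f i * g (i - N) = 1 := by
  intro i hi1 hiN
  rcases lt_or_eq_of_le hiN with hi | rfl
  · exact hmid i hi1 (by omega)
  have hcancel : ∏ i ∈ Icc 1 (N - 2), (f i * g (i - N)) = 1 :=
    prod_eq_one fun i hi => hmid i (mem_Icc.1 hi).1 (mem_Icc.1 hi).2
  rw [prod_mul_distrib, prod_Icc_sub g, show N - 2 - N = -1 - 1 by ring] at hcancel
  rw [prod_Icc_eq_prod_Icc_sub_one_mul g (by omega), show (0 : ℤ) - 1 = -1 by ring,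
    prod_Icc_eq_prod_Icc_sub_one_mul g (by omega)] at hprod
  rw [show N - 1 - N = -1 by ring]
  linear_combination (-(f (N - 1) * g (-1))) * hcancel
    + (g (-1) * ∏ i ∈ Icc (1 - N) (-1 - 1), g i) * htop + hprod

lemma mul_apply_neg_eq_one_of_mem_Ico (hg : ∀ a, g a * g (-a - N + 1) = 1)
    (hrec : ∀ a, f a * g (a + 1) = g a * f (a + N)) (hf0 : f 0 = 1)
    (hlow : ∀ i, 1 ≤ i → i ≤ N - 1 → f i * g (i - N) = 1) {a : ℤ} (ha : a ∈ Set.Ico 0 N) :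
    f a * f (-a) = 1 := by
  obtain ⟨ha0, haN⟩ := ha
  rcases eq_or_lt_of_le ha0 with rfl | ha0
  · simp [hf0]
  have h1 := hlow a (by omega) (by omega)
  have h2 := hlow (N - a) (by omega) (by omega)
  have hA := hg (a - N)
  have hR := hrec (-a)
  rw [show N - a - N = -a by ring] at h2
  rw [show -(a - N) - N + 1 = -a + 1 by ring] at hA
  rw [show -a + N = N - a by ring] at hR
  linear_combination (-(f a * f (-a))) * hA + (f a * g (a - N)) * hR
    + (g (-a) * f (N - a)) * h1 + h2

theorem mul_apply_neg_eq_one (hN : 2 ≤ N) (hg : ∀ a, g a * g (-a - N + 1) = 1)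
    (hprod : ∏ i ∈ Icc (1 - N) 0, g i = 1) (hrec : ∀ a, f a * g (a + 1) = g a * f (a + N))
    (hf0 : f 0 = 1) (hmid : ∀ i, 1 ≤ i → i ≤ N - 2 → f i * g (i - N) = 1)
    (htop : f (N - 1) * ∏ i ∈ Icc 1 (N - 2), f i = g 0) (a : ℤ) :
    f a * f (-a) = 1 :=
  (periodic_mul_apply_neg hg hrec).eq_of_forall_mem_Ico (by omega)
    (fun _ ha => mul_apply_neg_eq_one_of_mem_Ico hg hrec hf0
      (mul_apply_sub_eq_one_of_le_sub_one hN hprod hmid htop) ha) a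

end ConstantTerms

/-- Lemma 3.8: from a family `ψ` of invertible power series satisfying the two
constant-term conditions, the family `φ` defined by the recursion satisfies
(a) `φ_a(0) φ_{-a}(0) = 1` and (b) `∏_{k=a}^{a+N-1} φ_k = ψ_a`. The recursion
defining `φ` is encoded by the (equivalent) multiplicative equations below. -/
theorem stmt6 {K : Type*} [Field K] (N : ℕ) (hN : 2 ≤ N)
    (ψ φ : ℤ → PowerSeries K)
    (hψu : ∀ a : ℤ, IsUnit (ψ a))
    (hψ1 : ∀ a : ℤ, PowerSeries.constantCoeff (ψ a) *
      PowerSeries.constantCoeff (ψ (-a - (N : ℤ) + 1)) = 1)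
    (hψ2 : ∏ i ∈ Finset.Icc (1 - (N : ℤ)) 0, PowerSeries.constantCoeff (ψ i) = 1)
    (hφ0 : φ 0 = 1)
    (hφmid : ∀ i : ℤ, 1 ≤ i → i ≤ (N : ℤ) - 2 → φ i * ψ (i - (N : ℤ)) = 1)
    (hφtop : φ ((N : ℤ) - 1) * ∏ i ∈ Finset.Icc (1 : ℤ) ((N : ℤ) - 2), φ i = ψ 0)
    (hφup : ∀ i : ℤ, (N : ℤ) ≤ i →
      φ i * ψ (i - (N : ℤ)) = ψ (i - (N : ℤ) + 1) * φ (i - (N : ℤ)))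
    (hφdown : ∀ i : ℤ, i ≤ -1 → φ i * ψ (i + 1) = ψ i * φ (i + (N : ℤ))) :
    (∀ a : ℤ, PowerSeries.constantCoeff (φ a) *
      PowerSeries.constantCoeff (φ (-a)) = 1) ∧
    (∀ a : ℤ, ∏ i ∈ Finset.Icc a (a + (N : ℤ) - 1), φ i = ψ a) := by
  have hN' : (2 : ℤ) ≤ N := by exact_mod_cast hN
  have hrec : ∀ a, φ a * ψ (a + 1) = ψ a * φ (a + N) := by
    intro a
    rcases le_or_gt a (-1) with ha | ha
    · exact hφdown a ha
    · have h := hφup (a + N) (by omega)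
      rw [add_sub_cancel_right] at h
      linear_combination -h
  have hinit : ∏ i ∈ Icc 0 ((N : ℤ) - 1), φ i = ψ 0 := by
    rw [prod_Icc_eq_mul_prod_Icc_add_one φ (by omega), hφ0, one_mul, zero_add,
      prod_Icc_eq_prod_Icc_sub_one_mul φ (by omega), show (N : ℤ) - 1 - 1 = N - 2 by ring,
      mul_comm, hφtop]
  refine ⟨fun a => ?_, prod_Icc_window_eq (by omega) hψu hrec hinit⟩
  refine mul_apply_neg_eq_one (f := PowerSeries.constantCoeff ∘ φ)
    (g := PowerSeries.constantCoeff ∘ ψ) hN' hψ1 hψ2 (fun a => ?_) ?_ (fun i h1 h2 => ?_) ?_ a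
  · simp only [Function.comp_apply, ← map_mul, hrec]
  · simp [hφ0]
  · simp only [Function.comp_apply, ← map_mul, hφmid i h1 h2, map_one]
  · simp only [Function.comp_apply, ← map_prod, ← map_mul, hφtop]
end
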